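/- arXiv:1510.05390 — 3 statements merged into one kernel-verified Lean document; each statement's English description precedes it below -/
import Mathlib

section
/- For any 0 < λ < n, the relative entropy from the binomial distribution Bin(n, λ/n) to the Poisson distribution with mean λ satisfies D(B_{n,λ/n} ‖ Π_λ) ≤ λ² / (n(n − λ)). -/
noncomputable section
open scoped BigOperators ENNReal
open Real

/-- Poisson mass function with mean `l`. -/
def poissonPmf (l : ℝ) : ℕ → ℝ := fun x => Real.exp (-l) * l ^ x / (Nat.factorial x)

/-- Mean of a mass function on ℕ. -/
def pmfMean (P : ℕ → ℝ) : ℝ := ∑' x : ℕ, (x : ℝ) * P x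

/-- Scaled score function. -/
def scaledScore (P : ℕ → ℝ) (x : ℕ) : ℝ :=
  ((x : ℝ) + 1) * P (x + 1) / (pmfMean P * P x) - 1

/-- Scaled Fisher information. -/
def scaledFisher (P : ℕ → ℝ) : ℝ := pmfMean P * ∑' x : ℕ, P x * (scaledScore P x) ^ 2

/-- Convolution of mass functions on ℕ. -/
def pmfConv (P Q : ℕ → ℝ) : ℕ → ℝ := fun x => ∑ y ∈ Finset.range (x + 1), P y * Q (x - y)

/-- Point mass at 0. -/
def delta0 : ℕ → ℝ := fun x => if x = 0 then 1 else 0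

/-- Convolution of a list of mass functions. -/
def convList (l : List (ℕ → ℝ)) : ℕ → ℝ := l.foldr pmfConv delta0

/-- n-fold convolution power. -/
def convPow (Q : ℕ → ℝ) : ℕ → (ℕ → ℝ)
  | 0 => delta0
  | n + 1 => pmfConv Q (convPow Q n)

/-- α-thinning of a mass function. -/
def thin (a : ℝ) (P : ℕ → ℝ) : ℕ → ℝ := fun x =>
  ∑' y : ℕ, (if x ≤ y then (y.choose x : ℝ) * a ^ x * (1 - a) ^ (y - x) * P y else 0)

/-- Relative entropy. -/
def relEnt (P Q : ℕ → ℝ) : ℝ := ∑' x : ℕ, P x * Real.log (P x / Q x)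

/-- Discrete (Shannon) entropy. -/
def pmfEntropy (P : ℕ → ℝ) : ℝ := -∑' x : ℕ, P x * Real.log (P x)

/-- Entropy functional Ent_P(f). -/
def entFunc (P f : ℕ → ℝ) : ℝ :=
  (∑' x : ℕ, P x * f x * Real.log (f x)) -
    (∑' x : ℕ, P x * f x) * Real.log (∑' x : ℕ, P x * f x)

/-- Variance of `g` under `P`. -/
def pmfVar (P g : ℕ → ℝ) : ℝ := ∑' x : ℕ, P x * (g x - ∑' y : ℕ, P y * g y) ^ 2

/-- Ultra-log-concavity: `x P(x)² ≥ (x+1) P(x+1) P(x-1)` for all `x ≥ 1`. -/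
def IsULC (P : ℕ → ℝ) : Prop :=
  ∀ x : ℕ, ((x : ℝ) + 2) * P (x + 2) * P x ≤ ((x : ℝ) + 1) * P (x + 1) ^ 2

/-- `P(x-1)` with the convention `P(-1) = 0`. -/
def pm1 (P : ℕ → ℝ) : ℕ → ℝ := fun x => if x = 0 then 0 else P (x - 1)

/-- Johnstone–MacGibbon Fisher information, valued in `ℝ≥0∞`. -/
def jmFisher (P : ℕ → ℝ) : ℝ≥0∞ :=
  ∑' x : ℕ, if P x = 0 ∧ pm1 P x ≠ 0 then ⊤
    else ENNReal.ofReal (P x * (pm1 P x / P x - 1) ^ 2)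

/-- c-log-concavity. -/
def CLogConcave (P : ℕ → ℝ) (c : ℝ) : Prop :=
  ∀ x : ℕ, c ≤ P x / P (x + 1) - pm1 P x / P x

/-- Binomial mass function. -/
def binomialPmf (n : ℕ) (p : ℝ) : ℕ → ℝ := fun x =>
  if x ≤ n then (n.choose x : ℝ) * p ^ x * (1 - p) ^ (n - x) else 0

/-- Bernoulli mass function. -/
def bernoulliPmf (p : ℝ) : ℕ → ℝ := fun x =>
  if x = 0 then 1 - p else if x = 1 then p else 0

/-! With `p = λ/n` and `X ~ Bin(n, p)`, the log-likelihood ratio at `x ≤ n` is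
`∑_{k<x} log (1 - k/n) + (n - x) log (1 - p) + λ`, so
`D = E[∑_{k<X} log (1 - k/n)] + n ((1 - p) log (1 - p) + p)`. Expanding both logarithms in power
series, the `j`-th term of `D` is `n p^(j+2) / ((j+1)(j+2)) - E[∑_{k<X} k^(j+1)] / ((j+1) n^(j+1))`.
Writing `(x)_m` for the falling factorial, `∑_{k<x} k^m ≥ (x)_(m+1) / (m+1)`, `E[(X)_m] = (n)_m p^m`
and `n^(m+1) - (n)_(m+1) ≤ m(m+1) n^m / 2`, so this term is at most `p^(j+2) / 2`. Summing gives
`D ≤ p² / (2(1 - p)) = λ² / (2n(n - λ))`. -/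

open Finset

namespace Nat

theorem succ_mul_sum_range_descFactorial (m x : ℕ) :
    (m + 1) * ∑ k ∈ range x, k.descFactorial m = x.descFactorial (m + 1) := by
  induction x with
  | zero => simp
  | succ x ih =>
    rw [sum_range_succ, Nat.mul_add, ih, succ_descFactorial_succ, descFactorial_succ]
    rcases le_or_gt m x with h | h
    · rw [← Nat.add_mul, show x - m + (m + 1) = x + 1 by omega]
    · simp [descFactorial_eq_zero_iff_lt.mpr (by omega : x < m)]

theorem descFactorial_succ_le_succ_mul_sum_range_pow (m x : ℕ) :
    x.descFactorial (m + 1) ≤ (m + 1) * ∑ k ∈ range x, k ^ m := by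
  rw [← succ_mul_sum_range_descFactorial]
  gcongr with k
  exact descFactorial_le_pow k m

theorem two_mul_pow_succ_le_descFactorial_succ (n m : ℕ) :
    2 * n ^ (m + 1) ≤ 2 * n.descFactorial (m + 1) + m * (m + 1) * n ^ m := by
  induction m with
  | zero => simp
  | succ m ih =>
    have hstep : n * n.descFactorial (m + 1) ≤
        n.descFactorial (m + 2) + (m + 1) * n.descFactorial (m + 1) := by
      rw [descFactorial_succ n (m + 1), ← Nat.add_mul]
      exact Nat.mul_le_mul_right _ (by omega)
    have hle := descFactorial_le_pow n (m + 1)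
    calc 2 * n ^ (m + 2) = n * (2 * n ^ (m + 1)) := by ring
      _ ≤ n * (2 * n.descFactorial (m + 1) + m * (m + 1) * n ^ m) := Nat.mul_le_mul_left n ih
      _ = 2 * (n * n.descFactorial (m + 1)) + m * (m + 1) * n ^ (m + 1) := by ring
      _ ≤ 2 * n.descFactorial (m + 2) + (m + 1) * (m + 2) * n ^ (m + 1) := by nlinarith

end Nat

theorem binomialPmf_of_lt {n x : ℕ} (p : ℝ) (h : n < x) : binomialPmf n p x = 0 := by
  simp [binomialPmf, h.not_ge]

theorem binomialPmf_nonneg {p : ℝ} (hp0 : 0 ≤ p) (hp1 : p ≤ 1) (n x : ℕ) :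
    0 ≤ binomialPmf n p x := by
  unfold binomialPmf
  split_ifs
  · have : 0 ≤ 1 - p := sub_nonneg.mpr hp1
    positivity
  · rfl

theorem succ_mul_binomialPmf_succ (n x : ℕ) (p : ℝ) :
    (x + 1) * binomialPmf (n + 1) p (x + 1) = (n + 1) * p * binomialPmf n p x := by
  unfold binomialPmf
  split_ifs with h h'
  · have hc : ((n + 1 : ℕ) * n.choose x : ℝ) = ((n + 1).choose (x + 1) * (x + 1) : ℕ) := by
      exact_mod_cast Nat.add_one_mul_choose_eq n x
    push_cast at hc
    rw [show n + 1 - (x + 1) = n - x by omega]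
    linear_combination -p ^ (x + 1) * (1 - p) ^ (n - x) * hc
  all_goals first | omega | simp

theorem sum_binomialPmf (n : ℕ) (p : ℝ) : ∑ x ∈ range (n + 1), binomialPmf n p x = 1 := by
  have h := (add_pow p (1 - p) n).symm
  rw [add_sub_cancel, one_pow] at h
  rw [← h]
  refine sum_congr rfl fun x hx => ?_
  rw [binomialPmf, if_pos (Nat.lt_succ_iff.mp (mem_range.mp hx))]
  ring

theorem sum_descFactorial_mul_binomialPmf (m n : ℕ) (p : ℝ) :
    ∑ x ∈ range (n + 1), (x.descFactorial m : ℝ) * binomialPmf n p x =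
      n.descFactorial m * p ^ m := by
  induction m generalizing n with
  | zero => simpa using sum_binomialPmf n p
  | succ m ih =>
    rw [sum_range_succ', Nat.zero_descFactorial_succ]
    cases n with
    | zero => simp
    | succ n =>
      have hterm (x : ℕ) : ((x + 1).descFactorial (m + 1) : ℝ) * binomialPmf (n + 1) p (x + 1) =
          (n + 1) * p * ((x.descFactorial m : ℝ) * binomialPmf n p x) := by
        rw [Nat.succ_descFactorial_succ, Nat.cast_mul, mul_comm ((x + 1 : ℕ) : ℝ), mul_assoc,
          Nat.cast_succ, succ_mul_binomialPmf_succ]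
        ring
      rw [sum_congr rfl fun x _ => hterm x, ← mul_sum, ih, Nat.succ_descFactorial_succ]
      push_cast
      ring

theorem descFactorial_div_pow_eq_prod_range {n : ℕ} (hn : n ≠ 0) (x : ℕ) :
    (n.descFactorial x : ℝ) / (n : ℝ) ^ x = ∏ k ∈ range x, (1 - (k : ℝ) / n) := by
  have hpow : (n : ℝ) ^ x = ∏ _k ∈ range x, (n : ℝ) := by simp
  rw [← descPochhammer_eval_eq_descFactorial, descPochhammer_eval_eq_prod_range, hpow,
    ← prod_div_distrib]
  refine prod_congr rfl fun k _ => ?_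
  rw [sub_div, div_self (Nat.cast_ne_zero.mpr hn)]

theorem binomialPmf_div_poissonPmf {n x : ℕ} {lam : ℝ} (h0 : 0 < lam) (h1 : lam < n)
    (hx : x ≤ n) :
    binomialPmf n (lam / n) x / poissonPmf lam x =
      (∏ k ∈ range x, (1 - (k : ℝ) / n)) * (1 - lam / n) ^ (n - x) * exp lam := by
  have hn : (n : ℝ) ≠ 0 := (h0.trans h1).ne'
  rw [← descFactorial_div_pow_eq_prod_range (Nat.cast_ne_zero.mp hn),
    Nat.descFactorial_eq_factorial_mul_choose, binomialPmf, poissonPmf, if_pos hx, exp_neg, div_pow]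
  push_cast
  field_simp

theorem log_binomialPmf_div_poissonPmf {n x : ℕ} {lam : ℝ} (h0 : 0 < lam) (h1 : lam < n)
    (hx : x ≤ n) :
    log (binomialPmf n (lam / n) x / poissonPmf lam x) =
      ∑ k ∈ range x, log (1 - (k : ℝ) / n) + (n - x) * log (1 - lam / n) + lam := by
  have hn : (0 : ℝ) < n := h0.trans h1
  have hfactor : ∀ k ∈ range x, 0 < 1 - (k : ℝ) / n := fun k hk => by
    have hkn : (k : ℝ) < n := by exact_mod_cast (mem_range.mp hk).trans_le hx
    rw [sub_pos, div_lt_one hn]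
    exact hkn
  have hq : 0 < 1 - lam / n := by rw [sub_pos, div_lt_one hn]; exact h1
  have hprod := prod_pos hfactor
  rw [binomialPmf_div_poissonPmf h0 h1 hx, log_mul (by positivity) (exp_pos lam).ne', log_exp,
    log_mul hprod.ne' (pow_pos hq _).ne', log_pow, log_prod fun k hk => (hfactor k hk).ne',
    Nat.cast_sub hx]

theorem relEnt_binomialPmf_poissonPmf {n : ℕ} {lam : ℝ} (h0 : 0 < lam) (h1 : lam < n) :
    relEnt (binomialPmf n (lam / n)) (poissonPmf lam) =
      ∑ x ∈ range (n + 1), binomialPmf n (lam / n) x * ∑ k ∈ range x, log (1 - (k : ℝ) / n) +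
        ((n - lam) * log (1 - lam / n) + lam) := by
  set P := binomialPmf n (lam / n)
  have hmean : ∑ x ∈ range (n + 1), (x : ℝ) * P x = lam := by
    simpa [mul_div_cancel₀ _ (h0.trans h1).ne'] using
      sum_descFactorial_mul_binomialPmf 1 n (lam / n)
  have hout : ∀ x ∉ range (n + 1), P x * log (P x / poissonPmf lam x) = 0 := fun x hx => by
    have hPx : P x = 0 := binomialPmf_of_lt _ (by simpa using hx)
    rw [hPx, zero_mul]
  rw [relEnt, tsum_eq_sum hout]
  calc ∑ x ∈ range (n + 1), P x * log (P x / poissonPmf lam x)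
      = ∑ x ∈ range (n + 1), (P x * ∑ k ∈ range x, log (1 - (k : ℝ) / n) +
          (n * P x - x * P x) * log (1 - lam / n) + lam * P x) := by
        refine sum_congr rfl fun x hx => ?_
        rw [log_binomialPmf_div_poissonPmf h0 h1 (Nat.lt_succ_iff.mp (mem_range.mp hx))]
        ring
    _ = _ := by
        rw [sum_add_distrib, sum_add_distrib, ← sum_mul, sum_sub_distrib, ← mul_sum, ← mul_sum,
          hmean, sum_binomialPmf]
        ring

theorem hasSum_pow_div_one_sub_mul_log_one_sub {p : ℝ} (hp : |p| < 1) :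
    HasSum (fun j : ℕ => p ^ (j + 2) / ((j + 1) * (j + 2))) ((1 - p) * log (1 - p) + p) := by
  have hlog := Real.hasSum_pow_div_log_of_abs_lt_one hp
  have hshift : HasSum (fun j : ℕ => p ^ (j + 2) / (j + 2)) (-log (1 - p) - p) := by
    have := (hasSum_nat_add_iff' 1).mpr hlog
    simpa [add_assoc, one_add_one_eq_two] using this
  have hterm : (fun j : ℕ => p ^ (j + 2) / ((j + 1) * (j + 2))) =
      fun j : ℕ => p * (p ^ (j + 1) / (j + 1)) - p ^ (j + 2) / (j + 2) := by
    funext j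
    field_simp
    ring
  rw [hterm, show (1 - p) * log (1 - p) + p = p * -log (1 - p) - (-log (1 - p) - p) by ring]
  exact (hlog.mul_left p).sub hshift

theorem hasSum_sum_pow_div_neg_sum_log_one_sub_div {n x : ℕ} (hx : x ≤ n) :
    HasSum (fun j : ℕ => (∑ k ∈ range x, (k : ℝ) ^ (j + 1)) / ((j + 1) * (n : ℝ) ^ (j + 1)))
      (-∑ k ∈ range x, log (1 - (k : ℝ) / n)) := by
  rw [← sum_neg_distrib]
  simp_rw [sum_div]
  refine hasSum_sum fun k hk => ?_
  have hkn : (k : ℝ) < n := by exact_mod_cast (mem_range.mp hk).trans_le hx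
  have habs : |(k : ℝ) / n| < 1 := by
    rw [abs_of_nonneg (by positivity), div_lt_one ((k.cast_nonneg).trans_lt hkn)]
    exact hkn
  convert Real.hasSum_pow_div_log_of_abs_lt_one habs using 2 with j
  rw [div_pow, div_div, mul_comm]

theorem descFactorial_mul_pow_le_sum_binomialPmf_mul_sum_pow {p : ℝ} (hp0 : 0 ≤ p) (hp1 : p ≤ 1)
    (m n : ℕ) :
    (n.descFactorial (m + 1) : ℝ) * p ^ (m + 1) ≤
      (m + 1) * ∑ x ∈ range (n + 1), binomialPmf n p x * ∑ k ∈ range x, (k : ℝ) ^ m := by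
  rw [← sum_descFactorial_mul_binomialPmf, mul_sum]
  refine sum_le_sum fun x _ => ?_
  have h : (x.descFactorial (m + 1) : ℝ) ≤ (m + 1) * ∑ k ∈ range x, (k : ℝ) ^ m := by
    exact_mod_cast Nat.descFactorial_succ_le_succ_mul_sum_range_pow m x
  calc (x.descFactorial (m + 1) : ℝ) * binomialPmf n p x
      ≤ (m + 1) * (∑ k ∈ range x, (k : ℝ) ^ m) * binomialPmf n p x :=
        mul_le_mul_of_nonneg_right h (binomialPmf_nonneg hp0 hp1 n x)
    _ = _ := by ring

theorem mul_pow_div_sub_sum_binomialPmf_le {n : ℕ} (hn : 0 < n) {p : ℝ} (hp0 : 0 ≤ p)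
    (hp1 : p ≤ 1) (j : ℕ) :
    n * (p ^ (j + 2) / ((j + 1) * (j + 2))) -
        (∑ x ∈ range (n + 1), binomialPmf n p x * ∑ k ∈ range x, (k : ℝ) ^ (j + 1)) /
          ((j + 1) * (n : ℝ) ^ (j + 1)) ≤
      p ^ (j + 2) / 2 := by
  set E := ∑ x ∈ range (n + 1), binomialPmf n p x * ∑ k ∈ range x, (k : ℝ) ^ (j + 1)
  have hE : (n.descFactorial (j + 2) : ℝ) * p ^ (j + 2) ≤ (j + 2) * E := by
    convert descFactorial_mul_pow_le_sum_binomialPmf_mul_sum_pow hp0 hp1 (j + 1) n using 2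
    push_cast
    ring
  have hdesc : 2 * (n : ℝ) ^ (j + 2) ≤
      2 * n.descFactorial (j + 2) + (j + 1) * (j + 2) * (n : ℝ) ^ (j + 1) := by
    exact_mod_cast Nat.two_mul_pow_succ_le_descFactorial_succ n (j + 1)
  rw [sub_le_iff_le_add, ← mul_div_assoc, div_add_div _ _ (by positivity) (by positivity),
    div_le_div_iff₀ (by positivity) (by positivity)]
  linear_combination ((j : ℝ) + 1) * (p ^ (j + 2) * hdesc + 2 * hE)

theorem relEnt_binomialPmf_poissonPmf_le {n : ℕ} {lam : ℝ} (h0 : 0 < lam) (h1 : lam < n) :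
    relEnt (binomialPmf n (lam / n)) (poissonPmf lam) ≤ lam ^ 2 / (2 * n * (n - lam)) := by
  have hn : (0 : ℝ) < n := h0.trans h1
  set p := lam / n with hp
  have hp0 : 0 < p := div_pos h0 hn
  have hp1 : p < 1 := (div_lt_one hn).mpr h1
  have hlam : lam = n * p := by rw [hp, mul_div_cancel₀ _ hn.ne']
  have hpoisson : HasSum (fun j : ℕ => n * (p ^ (j + 2) / ((j + 1) * (j + 2))))
      ((n - lam) * log (1 - p) + lam) := by
    rw [show (n - lam) * log (1 - p) + lam = n * ((1 - p) * log (1 - p) + p) by rw [hlam]; ring]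
    exact (hasSum_pow_div_one_sub_mul_log_one_sub (abs_lt.mpr ⟨by linarith, hp1⟩)).mul_left _
  have hbinomial := hasSum_sum fun x (hx : x ∈ range (n + 1)) =>
    (hasSum_sum_pow_div_neg_sum_log_one_sub_div (Nat.lt_succ_iff.mp (mem_range.mp hx))).mul_left
      (binomialPmf n p x)
  have hgeom : HasSum (fun j : ℕ => p ^ (j + 2) / 2) (p ^ 2 / (2 * (1 - p))) := by
    have hterm : (fun j : ℕ => p ^ (j + 2) / 2) = fun j : ℕ => p ^ 2 / 2 * p ^ j := by
      funext j
      ring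
    rw [hterm, show p ^ 2 / (2 * (1 - p)) = p ^ 2 / 2 * (1 - p)⁻¹ by field_simp]
    exact (hasSum_geometric_of_lt_one hp0.le hp1).mul_left _
  have hterm (j : ℕ) : n * (p ^ (j + 2) / ((j + 1) * (j + 2))) -
      ∑ x ∈ range (n + 1), binomialPmf n p x *
        ((∑ k ∈ range x, (k : ℝ) ^ (j + 1)) / ((j + 1) * (n : ℝ) ^ (j + 1))) ≤ p ^ (j + 2) / 2 := by
    rw [sum_congr rfl fun x _ => (mul_div_assoc _ _ _).symm, ← sum_div]
    exact mul_pow_div_sub_sum_binomialPmf_le (Nat.cast_pos.mp hn) hp0.le hp1.le j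
  have hle := hasSum_le hterm (hpoisson.sub hbinomial) hgeom
  rw [relEnt_binomialPmf_poissonPmf h0 h1]
  calc _ = (n - lam) * log (1 - p) + lam -
        ∑ x ∈ range (n + 1), binomialPmf n p x * -∑ k ∈ range x, log (1 - (k : ℝ) / n) := by
        simp only [mul_neg, sum_neg_distrib]
        ring
    _ ≤ p ^ 2 / (2 * (1 - p)) := hle
    _ = lam ^ 2 / (2 * n * (n - lam)) := by
        rw [hlam]
        field_simp

/-- relative entropy from Binomial(n, λ/n) to Poisson(λ). -/
theorem binomial_poisson_relEnt (n : ℕ) (lam : ℝ) (h0 : 0 < lam) (h1 : lam < n) :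
    relEnt (binomialPmf n (lam / n)) (poissonPmf lam) ≤ lam ^ 2 / (n * (n - lam)) := by
  have hpos : 0 < (n : ℝ) * (n - lam) := mul_pos (h0.trans h1) (sub_pos.mpr h1)
  calc _ ≤ lam ^ 2 / (2 * n * (n - lam)) := relEnt_binomialPmf_poissonPmf_le h0 h1
    _ ≤ lam ^ 2 / (n * (n - lam)) := by
        rw [mul_assoc]
        exact div_le_div_of_nonneg_left (sq_nonneg lam) hpos (by linarith)

end
end

section
/- For any two probability mass functions P and Q on the nonnegative integers with finite Johnstone–MacGibbon Fisher information, the convolution satisfies the subadditivity property I(P ⋆ Q) ≤ (I(P) + I(Q))/4. -/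
noncomputable section
open scoped BigOperators ENNReal
open Real

/-!
Write `ρ_P(x) = P(x-1)/P(x) - 1` for the score, so that `P ρ_P = P(· - 1) - P` and
`I(P) = Σ P ρ_P²`. Shifting by one commutes with convolution, hence for independent `Y ~ P`,
`Z ~ Q` the score of `P ⋆ Q` at `x` is the conditional expectation of `(ρ_P(Y) + ρ_Q(Z)) / 2`
given `Y + Z = x`. Jensen's inequality bounds `I(P ⋆ Q)` by `E[((ρ_P(Y) + ρ_Q(Z)) / 2)²]`,
which is `(I(P) + I(Q)) / 4` because both scores have mean zero.
-/

open Finset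

def jmScore (P : ℕ → ℝ) (x : ℕ) : ℝ := pm1 P x / P x - 1

lemma mul_sq_le_sum_mul_sq_of_mul_eq_sum {ι : Type*} (s : Finset ι) {w a : ι → ℝ} {m : ℝ}
    (hw : ∀ i ∈ s, 0 ≤ w i) (hm : (∑ i ∈ s, w i) * m = ∑ i ∈ s, w i * a i) :
    (∑ i ∈ s, w i) * m ^ 2 ≤ ∑ i ∈ s, w i * a i ^ 2 := by
  rcases (sum_nonneg hw).eq_or_lt with hW | hW
  · rw [← hW, zero_mul]
    exact sum_nonneg fun i hi => mul_nonneg (hw i hi) (sq_nonneg _)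
  refine le_of_mul_le_mul_left ?_ hW
  calc (∑ i ∈ s, w i) * ((∑ i ∈ s, w i) * m ^ 2) = (∑ i ∈ s, w i * a i) ^ 2 := by
        rw [← hm]; ring
    _ ≤ (∑ i ∈ s, w i) * ∑ i ∈ s, w i * a i ^ 2 :=
        sum_sq_le_sum_mul_sum_of_sq_le_mul s hw
          (fun i hi => mul_nonneg (hw i hi) (sq_nonneg _)) fun i _ => le_of_eq (by ring)

lemma hasSum_one_of_tsum_eq_one {f : ℕ → ℝ} (h : ∑' x, f x = 1) : HasSum f 1 := by
  have hf : Summable f := by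
    by_contra hns
    simp [tsum_eq_zero_of_not_summable hns] at h
  exact h ▸ hf.hasSum

section Convolution

variable (P Q : ℕ → ℝ)

lemma pmfConv_eq_sum_antidiagonal (x : ℕ) :
    pmfConv P Q x = ∑ p ∈ antidiagonal x, P p.1 * Q p.2 :=
  (Nat.sum_antidiagonal_eq_sum_range_succ (fun i j => P i * Q j) x).symm

lemma pmfConv_comm : pmfConv P Q = pmfConv Q P := by
  funext x
  rw [pmfConv_eq_sum_antidiagonal, pmfConv_eq_sum_antidiagonal,
    ← Nat.sum_antidiagonal_swap]
  simp only [Prod.fst_swap, Prod.snd_swap, mul_comm]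

lemma pmfConv_pm1_left : pmfConv (pm1 P) Q = pm1 (pmfConv P Q) := by
  funext x
  cases x with
  | zero => simp [pmfConv, pm1]
  | succ n =>
    rw [pmfConv_eq_sum_antidiagonal, Nat.sum_antidiagonal_succ]
    simp [pm1, pmfConv_eq_sum_antidiagonal]

lemma pmfConv_pm1_right : pmfConv P (pm1 Q) = pm1 (pmfConv P Q) := by
  rw [pmfConv_comm, pmfConv_pm1_left, pmfConv_comm]

variable {P Q}

lemma hasSum_pmfConv {a b : ℝ} (hP : HasSum P a) (hQ : HasSum Q b) :
    HasSum (pmfConv P Q) (a * b) := by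
  have h := hasSum_sum_range_mul_of_summable_norm hP.summable.norm hQ.summable.norm
  rwa [hP.tsum_eq, hQ.tsum_eq] at h

end Convolution

section Score

variable {P : ℕ → ℝ}

lemma hasSum_pm1 {a : ℝ} (h : HasSum P a) : HasSum (pm1 P) a := by
  rw [← hasSum_nat_add_iff' 1]
  simpa [pm1] using h

-- Since `x / 0 = 0`, the identity needs `pm1 P x = 0` wherever `P x = 0`.
lemma mul_jmScore (h0 : ∀ x, P x = 0 → pm1 P x = 0) (x : ℕ) :
    P x * jmScore P x = pm1 P x - P x := by
  by_cases hx : P x = 0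
  · simp [hx, h0 x hx]
  · rw [jmScore, mul_sub, mul_div_cancel₀ _ hx, mul_one]

lemma hasSum_mul_jmScore {a : ℝ} (hP : HasSum P a) (h0 : ∀ x, P x = 0 → pm1 P x = 0) :
    HasSum (fun x => P x * jmScore P x) 0 := by
  simpa only [mul_jmScore h0, sub_self] using (hasSum_pm1 hP).sub hP

lemma pm1_eq_zero_of_jmFisher_ne_top (h : jmFisher P ≠ ⊤) : ∀ x, P x = 0 → pm1 P x = 0 := by
  intro x hx
  by_contra hne
  refine h (top_le_iff.mp ?_)
  calc (⊤ : ℝ≥0∞) = if P x = 0 ∧ pm1 P x ≠ 0 then ⊤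
        else ENNReal.ofReal (P x * (pm1 P x / P x - 1) ^ 2) := by rw [if_pos ⟨hx, hne⟩]
    _ ≤ jmFisher P := ENNReal.le_tsum x

lemma jmFisher_eq_tsum_ofReal (h0 : ∀ x, P x = 0 → pm1 P x = 0) :
    jmFisher P = ∑' x, ENNReal.ofReal (P x * jmScore P x ^ 2) :=
  tsum_congr fun x => if_neg fun hx => hx.2 (h0 x hx.1)

lemma hasSum_jmFisher_toReal (hnn : ∀ x, 0 ≤ P x) (h : jmFisher P ≠ ⊤) :
    HasSum (fun x => P x * jmScore P x ^ 2) (jmFisher P).toReal := by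
  have hI := jmFisher_eq_tsum_ofReal (pm1_eq_zero_of_jmFisher_ne_top h)
  have hf0 : ∀ x, 0 ≤ P x * jmScore P x ^ 2 := fun x => mul_nonneg (hnn x) (sq_nonneg _)
  have hf : Summable fun x => P x * jmScore P x ^ 2 :=
    (ENNReal.summable_toReal (hI ▸ h)).congr fun x => ENNReal.toReal_ofReal (hf0 x)
  rw [hI, ← ENNReal.ofReal_tsum_of_nonneg hf0 hf, ENNReal.toReal_ofReal (tsum_nonneg hf0)]
  exact hf.hasSum

lemma jmFisher_le_ofReal_of_hasSum {g : ℕ → ℝ} {a : ℝ} (h0 : ∀ x, P x = 0 → pm1 P x = 0)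
    (hle : ∀ x, P x * jmScore P x ^ 2 ≤ g x) (hg0 : ∀ x, 0 ≤ g x) (hg : HasSum g a) :
    jmFisher P ≤ ENNReal.ofReal a := by
  rw [jmFisher_eq_tsum_ofReal h0, ← hg.tsum_eq, ENNReal.ofReal_tsum_of_nonneg hg0 hg.summable]
  exact ENNReal.tsum_le_tsum fun x => ENNReal.ofReal_le_ofReal (hle x)

end Score

section Subadditivity

variable {P Q : ℕ → ℝ}

lemma pm1_pmfConv_eq_zero (hPnn : ∀ x, 0 ≤ P x) (hQnn : ∀ x, 0 ≤ Q x)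
    (hQ0 : ∀ x, Q x = 0 → pm1 Q x = 0) :
    ∀ x, pmfConv P Q x = 0 → pm1 (pmfConv P Q) x = 0 := by
  intro x hx
  have hterm : ∀ y ∈ range (x + 1), P y * Q (x - y) = 0 :=
    (sum_eq_zero_iff_of_nonneg fun y _ => mul_nonneg (hPnn y) (hQnn _)).mp hx
  rw [← pmfConv_pm1_right]
  refine sum_eq_zero fun y hy => ?_
  rcases mul_eq_zero.mp (hterm y hy) with h | h
  · rw [h, zero_mul]
  · rw [hQ0 _ h, mul_zero]

lemma pmfConv_mul_sq_jmScore_le (hPnn : ∀ x, 0 ≤ P x) (hQnn : ∀ x, 0 ≤ Q x)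
    (hP0 : ∀ x, P x = 0 → pm1 P x = 0) (hQ0 : ∀ x, Q x = 0 → pm1 Q x = 0) (x : ℕ) :
    pmfConv P Q x * jmScore (pmfConv P Q) x ^ 2 ≤
      ∑ y ∈ range (x + 1), P y * Q (x - y) * ((jmScore P y + jmScore Q (x - y)) / 2) ^ 2 := by
  refine mul_sq_le_sum_mul_sq_of_mul_eq_sum _ (fun y _ => mul_nonneg (hPnn y) (hQnn _)) ?_
  change pmfConv P Q x * _ = _
  calc pmfConv P Q x * jmScore (pmfConv P Q) x
      = (pmfConv (pm1 P) Q x + pmfConv P (pm1 Q) x) / 2 - pmfConv P Q x := by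
        rw [mul_jmScore (pm1_pmfConv_eq_zero hPnn hQnn hQ0), pmfConv_pm1_left,
          pmfConv_pm1_right]
        ring
    _ = _ := by
        simp only [pmfConv, ← sum_add_distrib, sum_div, ← sum_sub_distrib]
        refine sum_congr rfl fun y _ => ?_
        rw [show P y * Q (x - y) * ((jmScore P y + jmScore Q (x - y)) / 2) =
            ((P y * jmScore P y) * Q (x - y) + P y * (Q (x - y) * jmScore Q (x - y))) / 2 by
              ring, mul_jmScore hP0, mul_jmScore hQ0]
        ring

lemma sum_mul_sq_avg_eq_pmfConv (a b : ℕ → ℝ) (x : ℕ) :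
    ∑ y ∈ range (x + 1), P y * Q (x - y) * ((a y + b (x - y)) / 2) ^ 2 =
      pmfConv (fun y => P y * a y ^ 2) Q x / 4 + pmfConv P (fun y => Q y * b y ^ 2) x / 4 +
        pmfConv (fun y => P y * a y) (fun y => Q y * b y) x / 2 := by
  simp only [pmfConv, sum_div, ← sum_add_distrib]
  refine sum_congr rfl fun y _ => ?_
  ring

lemma hasSum_sum_mul_sq_avg {a b : ℕ → ℝ} {IP IQ : ℝ} (hP : HasSum P 1) (hQ : HasSum Q 1)
    (hIP : HasSum (fun y => P y * a y ^ 2) IP) (hIQ : HasSum (fun y => Q y * b y ^ 2) IQ)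
    (ha : HasSum (fun y => P y * a y) 0) (hb : HasSum (fun y => Q y * b y) 0) :
    HasSum (fun x => ∑ y ∈ range (x + 1), P y * Q (x - y) * ((a y + b (x - y)) / 2) ^ 2)
      ((IP + IQ) / 4) := by
  simp only [sum_mul_sq_avg_eq_pmfConv]
  have h := (((hasSum_pmfConv hIP hQ).div_const 4).add
    ((hasSum_pmfConv hP hIQ).div_const 4)).add ((hasSum_pmfConv ha hb).div_const 2)
  rwa [mul_one, one_mul, mul_zero, zero_div, add_zero, ← add_div] at h

end Subadditivity

/-- subadditivity of the Johnstone–MacGibbon Fisher information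
on convolution. -/
theorem jmFisher_subadditive (P Q : ℕ → ℝ)
    (hPnonneg : ∀ x, 0 ≤ P x) (hQnonneg : ∀ x, 0 ≤ Q x)
    (hPpmf : ∑' x : ℕ, P x = 1) (hQpmf : ∑' x : ℕ, Q x = 1)
    (hPfin : jmFisher P ≠ ⊤) (hQfin : jmFisher Q ≠ ⊤) :
    jmFisher (pmfConv P Q) ≤ (jmFisher P + jmFisher Q) / 4 := by
  have hP0 := pm1_eq_zero_of_jmFisher_ne_top hPfin
  have hQ0 := pm1_eq_zero_of_jmFisher_ne_top hQfin
  have hP1 := hasSum_one_of_tsum_eq_one hPpmf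
  have hQ1 := hasSum_one_of_tsum_eq_one hQpmf
  have hbound := hasSum_sum_mul_sq_avg hP1 hQ1 (hasSum_jmFisher_toReal hPnonneg hPfin)
    (hasSum_jmFisher_toReal hQnonneg hQfin) (hasSum_mul_jmScore hP1 hP0)
    (hasSum_mul_jmScore hQ1 hQ0)
  calc jmFisher (pmfConv P Q)
      ≤ ENNReal.ofReal (((jmFisher P).toReal + (jmFisher Q).toReal) / 4) :=
        jmFisher_le_ofReal_of_hasSum (pm1_pmfConv_eq_zero hPnonneg hQnonneg hQ0)
          (pmfConv_mul_sq_jmScore_le hPnonneg hQnonneg hP0 hQ0)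
          (fun x => sum_nonneg fun y _ =>
            mul_nonneg (mul_nonneg (hPnonneg y) (hQnonneg _)) (sq_nonneg _))
          hbound
    _ = (jmFisher P + jmFisher Q) / 4 := by
        rw [ENNReal.ofReal_div_of_pos four_pos, ENNReal.ofReal_add ENNReal.toReal_nonneg
          ENNReal.toReal_nonneg, ENNReal.ofReal_toReal hPfin, ENNReal.ofReal_toReal hQfin]
        norm_num

end
end

section
/- Let P be a probability mass function with P(x) > 0 for every nonnegative integer x, and suppose P is c-log-concave for some c > 0, i.e. P(x)/P(x+1) − P(x−1)/P(x) ≥ c for all x ≥ 0 (with P(−1) = 0). Then P satisfies the Poincaré inequality Var_P(g) ≤ (1/c) Σ_{x≥0} P(x) (g(x+1) − g(x))² for all functions g for which both sides are finite. -/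
noncomputable section
open scoped BigOperators ENNReal
open Real

/-!
Write `h = g - E_P g` and `k n = ∑_{x ≤ n} P x * h x`, so that `k n - k (n - 1) = P n * h n`.
Summation by parts turns `∑ P h²` into `-∑ k n * (g (n + 1) - g n)`, up to a boundary term.
The ratios `E(n) ≥ c` give, by a telescoping induction, the dual inequality
`c ∑ k² / P ≤ ∑ (Δk)² / P = ∑ P h²`; together with `2ab ≤ P a² / c + c b² / P` this yields
`Var ≤ Var / 2 + (1 / 2c) ∑ P (Δg)²`. On partial sums the boundary terms vanish in the limit,
because c-log-concavity forces `P (j + n) ≤ P n * c⁻ʲ / j!`, so the tails of `P` are `O(P n)`.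
-/

open Finset Filter Topology Real
open scoped Nat

theorem two_mul_le_mul_sq_div_add {p t a b : ℝ} (hp : 0 < p) (ht : 0 < t) :
    2 * (a * b) ≤ p * a ^ 2 / t + t * b ^ 2 / p := by
  have key : p * a ^ 2 / t + t * b ^ 2 / p - 2 * (a * b) = (p * a - t * b) ^ 2 / (t * p) := by
    field_simp
    ring
  nlinarith [div_nonneg (sq_nonneg (p * a - t * b)) (mul_pos ht hp).le]

theorem sq_tsum_mul_le {w f : ℕ → ℝ} (hw : ∀ n, 0 ≤ w n) (hw_sum : Summable w)
    (hwf : Summable fun n => w n * f n) (hwf2 : Summable fun n => w n * f n ^ 2) :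
    (∑' n, w n * f n) ^ 2 ≤ (∑' n, w n) * ∑' n, w n * f n ^ 2 := by
  refine le_of_tendsto' (hwf.hasSum.tendsto_sum_nat.pow 2) fun N => ?_
  have hwf2_nonneg : ∀ n, 0 ≤ w n * f n ^ 2 := fun n => mul_nonneg (hw n) (sq_nonneg _)
  calc (∑ n ∈ range N, w n * f n) ^ 2
      ≤ (∑ n ∈ range N, w n) * ∑ n ∈ range N, w n * f n ^ 2 :=
        sum_sq_le_sum_mul_sum_of_sq_le_mul _ (fun n _ => hw n) (fun n _ => hwf2_nonneg n)
          fun n _ => le_of_eq (by ring)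
    _ ≤ (∑' n, w n) * ∑' n, w n * f n ^ 2 :=
        mul_le_mul (hw_sum.sum_le_tsum _ fun n _ => hw n)
          (hwf2.sum_le_tsum _ fun n _ => hwf2_nonneg n)
          (sum_nonneg fun n _ => hwf2_nonneg n) (tsum_nonneg hw)

theorem sum_range_sub_pm1_mul (k u : ℕ → ℝ) (N : ℕ) :
    ∑ n ∈ range (N + 1), (k n - pm1 k n) * u n =
      k N * u N - ∑ n ∈ range N, k n * (u (n + 1) - u n) := by
  induction N with
  | zero => simp [pm1]
  | succ N ih =>
    rw [sum_range_succ, ih, sum_range_succ]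
    simp only [pm1, Nat.add_one_ne_zero, if_false, Nat.add_sub_cancel]
    ring

theorem mul_sq_div_le_of_le_div_sub_div {a b p q s c : ℝ} (hp : 0 < p) (hq : 0 < q) (hs : 0 < s)
    (hE : c ≤ q / s - p / q) :
    c * b ^ 2 / q ≤ b ^ 2 / s + a ^ 2 / p - 2 * a * b / q := by
  have h1 : c * b ^ 2 / q ≤ (q / s - p / q) * b ^ 2 / q := by gcongr
  have h2 : (q / s - p / q) * b ^ 2 / q
      = b ^ 2 / s + a ^ 2 / p - 2 * a * b / q - (a * q - b * p) ^ 2 / (p * q ^ 2) := by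
    field_simp
    ring
  have h3 : 0 ≤ (a * q - b * p) ^ 2 / (p * q ^ 2) := by positivity
  linarith

namespace CLogConcave

variable {P : ℕ → ℝ} {c : ℝ}

theorem mul_succ_le_div (hclc : CLogConcave P c) (x : ℕ) :
    c * (x + 1) ≤ P x / P (x + 1) := by
  induction x with
  | zero => simpa [pm1] using hclc 0
  | succ x ih =>
    have h := hclc (x + 1)
    simp only [pm1, Nat.add_one_ne_zero, if_false, Nat.add_sub_cancel] at h
    push_cast
    linarith

theorem le_pow_div_factorial (hpos : ∀ x, 0 < P x) (hc : 0 < c) (hclc : CLogConcave P c)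
    (n j : ℕ) : P (j + n) ≤ P n * c⁻¹ ^ j / j ! := by
  induction j with
  | zero => simp
  | succ j ih =>
    have hratio := hclc.mul_succ_le_div (j + n)
    rw [le_div_iff₀ (hpos _)] at hratio
    have hshift : j + 1 + n = j + n + 1 := by omega
    have hn : (0 : ℝ) ≤ c * n * P (j + n + 1) := by have := hpos (j + n + 1); positivity
    calc P (j + 1 + n) ≤ P (j + n) / (c * (j + 1)) := by
          rw [le_div_iff₀ (by positivity), hshift]
          push_cast at hratio
          linarith
      _ ≤ P n * c⁻¹ ^ j / j ! / (c * (j + 1)) := by gcongr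
      _ = P n * c⁻¹ ^ (j + 1) / (j + 1)! := by
          rw [Nat.factorial_succ, pow_succ]
          push_cast
          field_simp

theorem summable (hpos : ∀ x, 0 < P x) (hc : 0 < c) (hclc : CLogConcave P c) : Summable P :=
  Summable.of_nonneg_of_le (fun x => (hpos x).le)
    (fun j => by simpa [mul_div_assoc] using hclc.le_pow_div_factorial hpos hc 0 j)
    ((Real.summable_pow_div_factorial c⁻¹).mul_left (P 0))

theorem tsum_nat_add_le (hpos : ∀ x, 0 < P x) (hc : 0 < c) (hclc : CLogConcave P c) (n : ℕ) :
    ∑' j, P (j + n) ≤ exp c⁻¹ * P n := by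
  have hexp : HasSum (fun j : ℕ => c⁻¹ ^ j / j !) (exp c⁻¹) := by
    rw [exp_eq_exp_ℝ]
    exact NormedSpace.expSeries_div_hasSum_exp c⁻¹
  calc ∑' j, P (j + n) ≤ ∑' j, P n * (c⁻¹ ^ j / j !) :=
        Summable.tsum_le_tsum
          (fun j => by rw [← mul_div_assoc]; exact hclc.le_pow_div_factorial hpos hc n j)
          ((summable_nat_add_iff n).2 (hclc.summable hpos hc)) (hexp.summable.mul_left _)
    _ = exp c⁻¹ * P n := by rw [tsum_mul_left, hexp.tsum_eq, mul_comm]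

theorem hardy_sum_range (hpos : ∀ x, 0 < P x) (hclc : CLogConcave P c) (k : ℕ → ℝ) (N : ℕ) :
    c * ∑ n ∈ range (N + 1), k n ^ 2 / P n ≤
      ∑ n ∈ range (N + 1), (k n - pm1 k n) ^ 2 / P n + k N ^ 2 / P (N + 1) - k N ^ 2 / P N := by
  induction N with
  | zero =>
    have hE : c ≤ P 0 / P 1 := by simpa [pm1] using hclc 0
    have h : c * (k 0 ^ 2 / P 0) ≤ P 0 / P 1 * (k 0 ^ 2 / P 0) := by
      gcongr
      exact div_nonneg (sq_nonneg _) (hpos 0).le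
    have e : P 0 / P 1 * (k 0 ^ 2 / P 0) = k 0 ^ 2 / P 1 := by
      field_simp [(hpos 0).ne']
    simp only [zero_add, sum_range_one, pm1, if_true, sub_zero]
    linarith
  | succ N ih =>
    have hE : c ≤ P (N + 1) / P (N + 1 + 1) - P N / P (N + 1) := by
      simpa [pm1] using hclc (N + 1)
    have hstep := mul_sq_div_le_of_le_div_sub_div (a := k N) (b := k (N + 1))
      (hpos N) (hpos (N + 1)) (hpos (N + 1 + 1)) hE
    have hpm : pm1 k (N + 1) = k N := by simp [pm1]
    have hexpand : (k (N + 1) - k N) ^ 2 / P (N + 1)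
        = k (N + 1) ^ 2 / P (N + 1) + k N ^ 2 / P (N + 1) - 2 * k N * k (N + 1) / P (N + 1) := by
      ring
    rw [sum_range_succ, sum_range_succ _ (N + 1), mul_add, hpm, mul_div_assoc']
    linarith

theorem sum_range_mul_sq_le (hpos : ∀ x, 0 < P x) (hc : 0 < c) (hclc : CLogConcave P c)
    (h : ℕ → ℝ) (N : ℕ) :
    ∑ x ∈ range (N + 1), P x * h x ^ 2 ≤
      1 / c * ∑ x ∈ range N, P x * (h (x + 1) - h x) ^ 2 + P N * h N ^ 2
        + (∑ x ∈ range (N + 1), P x * h x) ^ 2 / P (N + 1) := by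
  set k : ℕ → ℝ := fun n => ∑ x ∈ range (n + 1), P x * h x
  have hinc : ∀ n, k n - pm1 k n = P n * h n := by
    rintro (_ | n) <;> simp [k, pm1, sum_range_succ]
  have habel : ∑ x ∈ range (N + 1), P x * h x ^ 2
      = k N * h N - ∑ n ∈ range N, k n * (h (n + 1) - h n) := by
    rw [← sum_range_sub_pm1_mul]
    exact sum_congr rfl fun n _ => by rw [hinc]; ring
  have hhardy := hclc.hardy_sum_range hpos k N
  have hsq : ∀ n, (k n - pm1 k n) ^ 2 / P n = P n * h n ^ 2 := fun n => by
    rw [hinc]; field_simp [(hpos n).ne']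
  simp only [hsq] at hhardy
  rw [sum_range_succ (fun n => k n ^ 2 / P n)] at hhardy
  have hamgm : ∀ n, -(k n * (h (n + 1) - h n))
      ≤ 1 / c * (P n * (h (n + 1) - h n) ^ 2) / 2 + c * (k n ^ 2 / P n) / 2 := fun n => by
    have := two_mul_le_mul_sq_div_add (a := h (n + 1) - h n) (b := -k n) (hpos n) hc
    field_simp at this ⊢
    linarith
  have hamgm_sum := sum_le_sum fun n (_ : n ∈ range N) => hamgm n
  rw [sum_neg_distrib, sum_add_distrib, ← sum_div, ← sum_div, ← mul_sum, ← mul_sum]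
    at hamgm_sum
  have hboundary := two_mul_le_mul_sq_div_add (a := h N) (b := k N) (hpos N) one_pos
  have hkN : 0 ≤ k N ^ 2 / P N := div_nonneg (sq_nonneg _) (hpos N).le
  simp only [div_one, one_mul] at hboundary
  show _ ≤ _ + _ + k N ^ 2 / P (N + 1)
  linarith [mul_nonneg hc.le hkN]

theorem tendsto_sq_sum_range_div (hpos : ∀ x, 0 < P x) (hc : 0 < c) (hclc : CLogConcave P c)
    {h : ℕ → ℝ} (hPh : Summable fun x => P x * h x) (hPh2 : Summable fun x => P x * h x ^ 2)
    (hmean : ∑' x, P x * h x = 0) :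
    Tendsto (fun N => (∑ x ∈ range (N + 1), P x * h x) ^ 2 / P (N + 1)) atTop (𝓝 0) := by
  have hbound : ∀ N, (∑ x ∈ range (N + 1), P x * h x) ^ 2 / P (N + 1)
      ≤ exp c⁻¹ * ∑' j, P (j + (N + 1)) * h (j + (N + 1)) ^ 2 := fun N => by
    have htail : ∑ x ∈ range (N + 1), P x * h x = -∑' j, P (j + (N + 1)) * h (j + (N + 1)) := by
      linarith [hPh.sum_add_tsum_nat_add (N + 1)]
    have hcs := sq_tsum_mul_le (w := fun j => P (j + (N + 1))) (f := fun j => h (j + (N + 1)))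
      (fun j => (hpos _).le) ((summable_nat_add_iff (N + 1)).2 (hclc.summable hpos hc))
      ((summable_nat_add_iff (f := fun x => P x * h x) (N + 1)).2 hPh)
      ((summable_nat_add_iff (f := fun x => P x * h x ^ 2) (N + 1)).2 hPh2)
    have hW : 0 ≤ ∑' j, P (j + (N + 1)) * h (j + (N + 1)) ^ 2 :=
      tsum_nonneg fun j => mul_nonneg (hpos _).le (sq_nonneg _)
    rw [htail, neg_sq, div_le_iff₀ (hpos _)]
    calc _ ≤ _ := hcs
      _ ≤ exp c⁻¹ * P (N + 1) * ∑' j, P (j + (N + 1)) * h (j + (N + 1)) ^ 2 :=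
          mul_le_mul_of_nonneg_right (hclc.tsum_nat_add_le hpos hc (N + 1)) hW
      _ = _ := by ring
  have htail_tendsto : Tendsto (fun N => exp c⁻¹ * ∑' j, P (j + (N + 1)) * h (j + (N + 1)) ^ 2)
      atTop (𝓝 0) := by
    simpa using ((tendsto_sum_nat_add fun x => P x * h x ^ 2).comp
      (tendsto_add_atTop_nat 1)).const_mul (exp c⁻¹)
  exact squeeze_zero (fun N => div_nonneg (sq_nonneg _) (hpos _).le) hbound htail_tendsto

end CLogConcave

/-- a c-log-concave mass function with full support satisfies the
Poincaré inequality with constant 1/c. -/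
theorem clc_poincare (P : ℕ → ℝ) (hpos : ∀ x, 0 < P x)
    (hpmf : ∑' x : ℕ, P x = 1) (c : ℝ) (hc : 0 < c) (hclc : CLogConcave P c)
    (g : ℕ → ℝ)
    (h1 : Summable (fun x : ℕ => P x * g x))
    (h2 : Summable (fun x : ℕ => P x * (g x - ∑' y : ℕ, P y * g y) ^ 2))
    (h3 : Summable (fun x : ℕ => P x * (g (x + 1) - g x) ^ 2)) :
    pmfVar P g ≤ (1 / c) * ∑' x : ℕ, P x * (g (x + 1) - g x) ^ 2 := by
  have hP := hclc.summable hpos hc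
  set m := ∑' y, P y * g y
  have hPh : Summable fun x => P x * (g x - m) :=
    (h1.sub (hP.mul_right m)).congr fun x => by ring
  have hmean : ∑' x, P x * (g x - m) = 0 := by
    simp_rw [mul_sub]
    rw [h1.tsum_sub (hP.mul_right m), tsum_mul_right, hpmf, one_mul, sub_self]
  have hpartial : ∀ N, ∑ x ∈ range (N + 1), P x * (g x - m) ^ 2
      ≤ 1 / c * ∑' x, P x * (g (x + 1) - g x) ^ 2 + (P N * (g N - m) ^ 2
        + (∑ x ∈ range (N + 1), P x * (g x - m)) ^ 2 / P (N + 1)) := fun N => by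
    have hdiff : ∑ x ∈ range N, P x * ((g (x + 1) - m) - (g x - m)) ^ 2
        ≤ ∑' x, P x * (g (x + 1) - g x) ^ 2 := by
      simp_rw [sub_sub_sub_cancel_right]
      exact h3.sum_le_tsum _ fun x _ => mul_nonneg (hpos x).le (sq_nonneg _)
    have := hclc.sum_range_mul_sq_le hpos hc (fun x => g x - m) N
    have := mul_le_mul_of_nonneg_left hdiff (one_div_pos.2 hc).le
    linarith
  have herr := h2.tendsto_atTop_zero.add (hclc.tendsto_sq_sum_range_div hpos hc hPh h2 hmean)
  have hvar := h2.hasSum.tendsto_sum_nat.comp (tendsto_add_atTop_nat 1)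
  simpa [pmfVar] using le_of_tendsto_of_tendsto' hvar (herr.const_add _) hpartial

end
end
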